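/- Let A be a finite nonempty set and T a symmetric, irreflexive, saturated relation on A. If Q, Q₁, Q₂ ∈ 𝒫^T(A) satisfy Q₁ ⊆ Q^T, Q₂ ⊆ Q^T, and ((Q ∪ Q₁)^T)^T = ((Q ∪ Q₂)^T)^T, then Q₁ = Q₂; i.e. the partial operation Q ⊕ Q₁ := ((Q ∪ Q₁)^T)^T on 𝒫^T(A) satisfies the cancellation law. -/

import Mathlib

/-- For `B ⊆ A`, `B^T := {l ∈ A | ∀ l₁ ∈ B, (l₁, l) ∈ T}`. -/
def polar {α : Type*} (T : α → α → Prop) (B : Set α) : Set α :=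
  {l | ∀ l₁ ∈ B, T l₁ l}

/-- `𝒫_T(A)`: subsets whose distinct elements are pairwise related by `T`. -/
def PTset {α : Type*} (T : α → α → Prop) : Set (Set α) :=
  {U | ∀ l ∈ U, ∀ l₁ ∈ U, l₁ ≠ l → T l l₁}

/-- `𝒫^T(A)`: the image of `𝒫_T(A)` under `B ↦ B^T`. -/
def PTup {α : Type*} (T : α → α → Prop) : Set (Set α) :=
  polar T '' PTset T

/-- `T` is symmetric: for all `l ≠ l₁`, `(l, l₁) ∈ T ↔ (l₁, l) ∈ T`. -/
def SymmRel {α : Type*} (T : α → α → Prop) : Prop :=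
  ∀ l l₁, l ≠ l₁ → (T l l₁ ↔ T l₁ l)

/-- `T` is irreflexive. -/
def IrreflRel {α : Type*} (T : α → α → Prop) : Prop :=
  ∀ l, ¬ T l l

/-- `M` is a maximal element of `𝒫_T(A)` with respect to inclusion. -/
def MaxPT {α : Type*} (T : α → α → Prop) (M : Set α) : Prop :=
  M ∈ PTset T ∧ ∀ M' ∈ PTset T, M ⊆ M' → M' = M

/-- `T` is saturated: for every maximal `M ∈ 𝒫_T(A)` and every `B ⊆ M`,
`B^T = ((M \ B)^T)^T`. -/
def SaturatedRel {α : Type*} (T : α → α → Prop) : Prop :=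
  ∀ M, MaxPT T M → ∀ B ⊆ M, polar T B = polar T (polar T (M \ B))

/-! Write `Q = D₀ᵀᵀ` and `Q₁ = D₁ᵀᵀ` with cliques `D₀ ⊆ Q`, `D₁ ⊆ Q₁` (saturation applied to the
complement of a generating clique in a maximal clique). Since `Q₁ ⊆ Qᵀ`, the set `D₀ ∪ D₁` is a
clique with disjoint parts; extend it to a maximal clique `M`. Saturation in `M` gives
`D₁ᵀᵀ = (M \ D₁)ᵀ = D₀ᵀ ∩ (M \ (D₀ ∪ D₁))ᵀ = D₀ᵀ ∩ (D₀ ∪ D₁)ᵀᵀ`, that is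
`Q₁ = Qᵀ ∩ (Q ⊕ Q₁)`. So `Q₁` is determined by `Q` and `Q ⊕ Q₁`. -/

namespace SymmRel

variable {α : Type*} {T : α → α → Prop}

lemma symm (hsymm : SymmRel T) {a b : α} (h : T a b) : T b a := by
  by_cases hab : a = b
  · exact hab ▸ h
  · exact (hsymm a b hab).mp h

end SymmRel

section Polar

variable {α : Type*} {T : α → α → Prop}

lemma polar_anti {B C : Set α} (h : B ⊆ C) : polar T C ⊆ polar T B :=
  fun _ hx l₁ hl₁ => hx l₁ (h hl₁)

lemma polar_union (B C : Set α) : polar T (B ∪ C) = polar T B ∩ polar T C := by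
  ext x
  simp only [polar, Set.mem_ofPred_eq, Set.mem_union, Set.mem_inter_iff, or_imp, forall_and]

lemma subset_polar_polar (hsymm : SymmRel T) (B : Set α) : B ⊆ polar T (polar T B) :=
  fun x hx _ hy => hsymm.symm (hy x hx)

lemma polar_polar_polar (hsymm : SymmRel T) (B : Set α) :
    polar T (polar T (polar T B)) = polar T B :=
  (polar_anti (subset_polar_polar hsymm B)).antisymm (subset_polar_polar hsymm (polar T B))

lemma union_mem_PTset (hsymm : SymmRel T) {D₀ D₁ : Set α} (h₀ : D₀ ∈ PTset T)
    (h₁ : D₁ ∈ PTset T) (h₀₁ : D₁ ⊆ polar T D₀) : D₀ ∪ D₁ ∈ PTset T := by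
  rintro l (hl | hl) l₁ (hl₁ | hl₁) hne
  · exact h₀ l hl l₁ hl₁ hne
  · exact h₀₁ hl₁ l hl
  · exact hsymm.symm (h₀₁ hl l₁ hl₁)
  · exact h₁ l hl l₁ hl₁ hne

lemma disjoint_of_subset_polar (hirr : IrreflRel T) {D₀ D₁ : Set α} (h₀₁ : D₁ ⊆ polar T D₀) :
    Disjoint D₀ D₁ :=
  Set.disjoint_left.mpr fun x hx₀ hx₁ => hirr x (h₀₁ hx₁ x hx₀)

lemma exists_maxPT_superset {U : Set α} (hU : U ∈ PTset T) : ∃ M, MaxPT T M ∧ U ⊆ M := by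
  obtain ⟨M, hUM, hM⟩ := zorn_subset_nonempty (PTset T) (fun c hc hchain _ => by
    refine ⟨⋃₀ c, ?_, fun s hs => Set.subset_sUnion_of_mem hs⟩
    rintro l ⟨s, hs, hls⟩ l₁ ⟨t, ht, hl₁t⟩ hne
    rcases hchain.total hs ht with hst | hts
    · exact hc ht l (hst hls) l₁ hl₁t hne
    · exact hc hs l hls l₁ (hts hl₁t) hne) U hU
  exact ⟨M, ⟨hM.prop, fun M' hM' hMM' => (hM.eq_of_subset hM' hMM').symm⟩, hUM⟩

lemma SaturatedRel.polar_polar_eq (hsat : SaturatedRel T) {M B : Set α} (hM : MaxPT T M)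
    (hB : B ⊆ M) : polar T (polar T B) = polar T (M \ B) := by
  have h := hsat M hM (M \ B) Set.sdiff_subset
  rwa [Set.sdiff_sdiff_cancel_left hB, eq_comm] at h

lemma SaturatedRel.exists_PTset_polar_polar_eq (hsymm : SymmRel T) (hsat : SaturatedRel T)
    {Q : Set α} (hQ : Q ∈ PTup T) : ∃ D ∈ PTset T, polar T (polar T D) = Q := by
  obtain ⟨U, hU, rfl⟩ := hQ
  obtain ⟨M, hM, hUM⟩ := exists_maxPT_superset hU
  refine ⟨M \ U, fun l hl l₁ hl₁ => hM.1 l hl.1 l₁ hl₁.1, ?_⟩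
  rw [← hsat.polar_polar_eq hM hUM, polar_polar_polar hsymm]

lemma SaturatedRel.polar_polar_eq_polar_inter (hsat : SaturatedRel T) {M D₀ D₁ : Set α}
    (hM : MaxPT T M) (hD : D₀ ∪ D₁ ⊆ M) (hdisj : Disjoint D₀ D₁) :
    polar T (polar T D₁) = polar T D₀ ∩ polar T (polar T (D₀ ∪ D₁)) := by
  have hsplit : M \ D₁ = D₀ ∪ M \ (D₀ ∪ D₁) := by
    ext x
    have hx₀₁ : x ∈ D₀ → x ∉ D₁ := fun hx => Set.disjoint_left.mp hdisj hx
    have hxM : x ∈ D₀ ∪ D₁ → x ∈ M := fun hx => hD hx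
    simp only [Set.mem_sdiff, Set.mem_union] at hx₀₁ hxM ⊢
    tauto
  rw [hsat.polar_polar_eq hM (Set.subset_union_right.trans hD), hsplit, polar_union,
    hsat.polar_polar_eq hM hD]

theorem SaturatedRel.eq_polar_inter_polar_polar_union (hsymm : SymmRel T)
    (hirr : IrreflRel T) (hsat : SaturatedRel T) {Q Q₁ : Set α} (hQ : Q ∈ PTup T)
    (hQ₁ : Q₁ ∈ PTup T) (h : Q₁ ⊆ polar T Q) :
    Q₁ = polar T Q ∩ polar T (polar T (Q ∪ Q₁)) := by
  obtain ⟨D₀, hD₀, rfl⟩ := hsat.exists_PTset_polar_polar_eq hsymm hQ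
  obtain ⟨D₁, hD₁, rfl⟩ := hsat.exists_PTset_polar_polar_eq hsymm hQ₁
  rw [polar_polar_polar hsymm] at h
  have hD₁D₀ : D₁ ⊆ polar T D₀ := (subset_polar_polar hsymm D₁).trans h
  have hunion : polar T (polar T (polar T D₀) ∪ polar T (polar T D₁)) = polar T (D₀ ∪ D₁) := by
    rw [polar_union, polar_union, polar_polar_polar hsymm, polar_polar_polar hsymm]
  obtain ⟨M, hM, hDM⟩ := exists_maxPT_superset (union_mem_PTset hsymm hD₀ hD₁ hD₁D₀)
  rw [polar_polar_polar hsymm, hunion]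
  exact hsat.polar_polar_eq_polar_inter hM hDM (disjoint_of_subset_polar hirr hD₁D₀)

end Polar

theorem stmt4_general {α : Type*} (T : α → α → Prop)
    (hsymm : SymmRel T) (hirr : IrreflRel T) (hsat : SaturatedRel T) :
    ∀ Q ∈ PTup T, ∀ Q₁ ∈ PTup T, ∀ Q₂ ∈ PTup T,
      Q₁ ⊆ polar T Q → Q₂ ⊆ polar T Q →
      polar T (polar T (Q ∪ Q₁)) = polar T (polar T (Q ∪ Q₂)) →
      Q₁ = Q₂ := by
  intro Q hQ Q₁ hQ₁ Q₂ hQ₂ h₁ h₂ heq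
  rw [hsat.eq_polar_inter_polar_polar_union hsymm hirr hQ hQ₁ h₁,
    hsat.eq_polar_inter_polar_polar_union hsymm hirr hQ hQ₂ h₂, heq]

theorem stmt4 {α : Type*} [Fintype α] [Nonempty α] (T : α → α → Prop)
    (hsymm : SymmRel T) (hirr : IrreflRel T) (hsat : SaturatedRel T) :
    ∀ Q ∈ PTup T, ∀ Q₁ ∈ PTup T, ∀ Q₂ ∈ PTup T,
      Q₁ ⊆ polar T Q → Q₂ ⊆ polar T Q →
      polar T (polar T (Q ∪ Q₁)) = polar T (polar T (Q ∪ Q₂)) →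
      Q₁ = Q₂ :=
  stmt4_general T hsymm hirr hsat
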